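/- Let P : Cᵒᵖ → Pos be an existential doctrine, X an object of C and φ ∈ P(X), and let t denote the terminal object of C. Then the morphism (F_X, 𝔣) : P → P_(X,φ) is conservative (i.e., for every object A and α, β ∈ P(A), 𝔣_A(α) ≤ 𝔣_A(β) implies α ≤ β) if and only if ⊤ ≤ ∃^X_t(P(pr₂)(φ)) in P(t), where pr₂ : t×X → X and ∃^X_t : P(t×X) → P(t) is the existential quantifier of P. -/
import Mathlib


open CategoryTheory CategoryTheory.Limits

universe w w' v u v' u'

/-- A primary doctrine: a functor `Cᵒᵖ → Pos` (given by the fibers `obj` together with the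
reindexing maps `map`) on a category `C` with finite products, such that every fiber is an
inf-semilattice with a top element and every reindexing preserves binary meets and top. -/
structure PrimaryDoctrine (C : Type u) [Category.{v} C] where
  obj : C → Type w
  [sl : ∀ A, SemilatticeInf (obj A)]
  [tp : ∀ A, OrderTop (obj A)]
  map : ∀ {A B : C}, (A ⟶ B) → obj B → obj A
  map_id : ∀ (A : C) (α : obj A), map (𝟙 A) α = α
  map_comp : ∀ {A B D : C} (f : A ⟶ B) (g : B ⟶ D) (α : obj D),
      map (f ≫ g) α = map f (map g α)
  map_inf : ∀ {A B : C} (f : A ⟶ B) (α β : obj B), map f (α ⊓ β) = map f α ⊓ map f β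
  map_top : ∀ {A B : C} (f : A ⟶ B), map f (⊤ : obj B) = ⊤

attribute [instance] PrimaryDoctrine.sl PrimaryDoctrine.tp

/-- The component at `A` of the natural transformation `𝔣 : P ⟶ P_(X,φ) ∘ F_Xᵒᵖ`,
`𝔣_A(α) = P(pr₁)(φ) ⊓ P(pr₂)(α) ∈ P(X ⨯ A)`. -/
noncomputable def PrimaryDoctrine.frak {C : Type u} [Category.{v} C] [HasFiniteProducts C]
    (P : PrimaryDoctrine.{w} C) {X : C} (φ : P.obj X) (A : C) (α : P.obj A) :
    P.obj (X ⨯ A) :=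
  P.map prod.fst φ ⊓ P.map prod.snd α

/-- Existential structure on a primary doctrine: for all objects `B, A` a left adjoint
`∃^B_A : P(A ⨯ B) → P(A)` to `P(pr₁)`, satisfying Beck–Chevalley and Frobenius. -/
structure PrimaryDoctrine.ExistentialData {C : Type u} [Category.{v} C] [HasFiniteProducts C]
    (P : PrimaryDoctrine.{w} C) where
  ex : ∀ (B A : C), P.obj (A ⨯ B) → P.obj A
  adj : ∀ {B A : C} (α : P.obj (A ⨯ B)) (β : P.obj A),
      ex B A α ≤ β ↔ α ≤ P.map (prod.fst : A ⨯ B ⟶ A) β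
  bc : ∀ {B A A' : C} (f : A' ⟶ A) (α : P.obj (A ⨯ B)),
      ex B A' (P.map (prod.map f (𝟙 B)) α) = P.map f (ex B A α)
  frob : ∀ {B A : C} (α : P.obj (A ⨯ B)) (β : P.obj A),
      ex B A (α ⊓ P.map (prod.fst : A ⨯ B ⟶ A) β) = ex B A α ⊓ β

lemma PrimaryDoctrine.map_mono {C : Type u} [Category.{v} C] (P : PrimaryDoctrine.{w} C)
    {A B : C} (f : A ⟶ B) {α β : P.obj B} (h : α ≤ β) : P.map f α ≤ P.map f β := by
  have : α ⊓ β = α := inf_eq_left.mpr h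
  calc P.map f α = P.map f α ⊓ P.map f β := by rw [← P.map_inf, this]
    _ ≤ P.map f β := inf_le_right

lemma PrimaryDoctrine.ExistentialData.ex_mono {C : Type u} [Category.{v} C]
    [HasFiniteProducts C] {P : PrimaryDoctrine.{w} C} (E : P.ExistentialData)
    {B A : C} {α β : P.obj (A ⨯ B)} (h : α ≤ β) : E.ex B A α ≤ E.ex B A β :=
  (E.adj α _).mpr (h.trans ((E.adj β (E.ex B A β)).mp le_rfl))

/-- For an existential doctrine `P`, the morphism
`(F_X, 𝔣) : P → P_(X,φ)` is conservative (each `𝔣_A` reflects the order) if and only if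
`⊤ ≤ ∃^X_t(P(pr₂)(φ))` in `P(t)`, where `t` is the terminal object of `C`. -/
theorem pXphi_conservative_iff {C : Type u} [Category.{v} C] [HasFiniteProducts C]
    (P : PrimaryDoctrine.{w} C) (E : P.ExistentialData) (X : C) (φ : P.obj X) :
    (∀ (A : C) (α β : P.obj A), P.frak φ A α ≤ P.frak φ A β → α ≤ β) ↔
      (⊤ : P.obj (⊤_ C)) ≤ E.ex X (⊤_ C) (P.map (prod.snd : (⊤_ C) ⨯ X ⟶ X) φ) := by
  constructor
  · intro h
    set ε := E.ex X (⊤_ C) (P.map (prod.snd : (⊤_ C) ⨯ X ⟶ X) φ) with hε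
    apply h (⊤_ C) ⊤ ε
    -- unit of the adjunction
    have hu : P.map (prod.snd : (⊤_ C) ⨯ X ⟶ X) φ
        ≤ P.map (prod.fst : (⊤_ C) ⨯ X ⟶ ⊤_ C) ε :=
      (E.adj _ ε).mp le_rfl
    set σ : X ⨯ (⊤_ C) ⟶ (⊤_ C) ⨯ X := prod.lift prod.snd prod.fst with hσ
    have key : P.map (prod.fst : X ⨯ (⊤_ C) ⟶ X) φ
        ≤ P.map (prod.snd : X ⨯ (⊤_ C) ⟶ ⊤_ C) ε := by
      have := P.map_mono σ hu
      rwa [← P.map_comp, ← P.map_comp, hσ, prod.lift_snd, prod.lift_fst] at this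
    unfold PrimaryDoctrine.frak
    exact le_inf inf_le_left ((inf_le_left).trans key)
  · intro h A α β hle
    set ε := E.ex X (⊤_ C) (P.map (prod.snd : (⊤_ C) ⨯ X ⟶ X) φ) with hε
    set t : A ⟶ ⊤_ C := terminal.from A with ht
    have key : E.ex X A (P.map (prod.snd : A ⨯ X ⟶ X) φ) = P.map t ε := by
      have := E.bc t (P.map (prod.snd : (⊤_ C) ⨯ X ⟶ X) φ)
      rwa [← P.map_comp, prod.map_snd, Category.comp_id] at this
    set τ : A ⨯ X ⟶ X ⨯ A := prod.lift prod.snd prod.fst with hτ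
    have hτle : P.map (prod.snd : A ⨯ X ⟶ X) φ ⊓ P.map (prod.fst : A ⨯ X ⟶ A) α
        ≤ P.map (prod.snd : A ⨯ X ⟶ X) φ ⊓ P.map (prod.fst : A ⨯ X ⟶ A) β := by
      have := P.map_mono τ hle
      unfold PrimaryDoctrine.frak at this
      simp only [P.map_inf, ← P.map_comp, hτ, prod.lift_fst, prod.lift_snd] at this
      exact this
    calc α ≤ P.map t ε ⊓ α := le_inf (le_top.trans (by rw [← P.map_top t]; exact P.map_mono t h)) le_rfl
      _ = E.ex X A (P.map (prod.snd : A ⨯ X ⟶ X) φ) ⊓ α := by rw [key]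
      _ = E.ex X A (P.map (prod.snd : A ⨯ X ⟶ X) φ ⊓ P.map (prod.fst : A ⨯ X ⟶ A) α) :=
        (E.frob _ _).symm
      _ ≤ E.ex X A (P.map (prod.snd : A ⨯ X ⟶ X) φ ⊓ P.map (prod.fst : A ⨯ X ⟶ A) β) :=
        E.ex_mono hτle
      _ = E.ex X A (P.map (prod.snd : A ⨯ X ⟶ X) φ) ⊓ β := E.frob _ _
      _ ≤ β := inf_le_right
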